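/- Let B ⊆ ℕ be introreducible and let f : ℕ → ℕ be a function. If there is an infinite set Y ⊆ B that is computably enumerable relative to f (i.e., Y is the domain of a partial function that is partial recursive in f), then B is Turing reducible to f. -/

import Mathlib

/-- `NatRecursiveIn O f` means the partial function `f` is partial recursive in the
(total) oracle `O`. -/
inductive NatRecursiveIn (O : ℕ → ℕ) : (ℕ →. ℕ) → Prop
  | zero : NatRecursiveIn O (pure 0)
  | succ : NatRecursiveIn O Nat.succ
  | left : NatRecursiveIn O ↑fun n : ℕ => n.unpair.1
  | right : NatRecursiveIn O ↑fun n : ℕ => n.unpair.2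
  | oracle : NatRecursiveIn O ↑O
  | pair {f g} : NatRecursiveIn O f → NatRecursiveIn O g →
      NatRecursiveIn O fun n => Nat.pair <$> f n <*> g n
  | comp {f g} : NatRecursiveIn O f → NatRecursiveIn O g →
      NatRecursiveIn O fun n => g n >>= f
  | prec {f g} : NatRecursiveIn O f → NatRecursiveIn O g →
      NatRecursiveIn O (Nat.unpaired fun a n =>
        n.rec (f a) fun y IH => do let i ← IH; g (Nat.pair a (Nat.pair y i)))
  | rfind {f} : NatRecursiveIn O f →
      NatRecursiveIn O fun a => Nat.rfind fun n => (fun m => m = 0) <$> f (Nat.pair a n)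

/-- Turing reducibility between total functions on `ℕ`. -/
def NatTuringReducible (f g : ℕ → ℕ) : Prop := NatRecursiveIn g ↑f

/-- Turing equivalence of total functions on `ℕ`. -/
def NatTuringEquivalent (f g : ℕ → ℕ) : Prop := NatTuringReducible f g ∧ NatTuringReducible g f

theorem NatTuringReducible.refl (f : ℕ → ℕ) : NatTuringReducible f f := NatRecursiveIn.oracle

theorem NatRecursiveIn.trans' {f : ℕ →. ℕ} {g h : ℕ → ℕ}
    (hf : NatRecursiveIn g f) (hg : NatTuringReducible g h) : NatRecursiveIn h f := by
  induction hf with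
  | zero => exact .zero
  | succ => exact .succ
  | left => exact .left
  | right => exact .right
  | oracle => exact hg
  | pair _ _ ih₁ ih₂ => exact .pair ih₁ ih₂
  | comp _ _ ih₁ ih₂ => exact .comp ih₁ ih₂
  | prec _ _ ih₁ ih₂ => exact .prec ih₁ ih₂
  | rfind _ ih => exact .rfind ih

theorem NatTuringReducible.trans {f g h : ℕ → ℕ}
    (h₁ : NatTuringReducible f g) (h₂ : NatTuringReducible g h) : NatTuringReducible f h :=
  NatRecursiveIn.trans' h₁ h₂

/-- The setoid of Turing equivalence. -/
def turingSetoid : Setoid (ℕ → ℕ) :=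
  ⟨NatTuringEquivalent,
    fun f => ⟨.refl f, .refl f⟩,
    fun ⟨h₁, h₂⟩ => ⟨h₂, h₁⟩,
    fun ⟨a₁, a₂⟩ ⟨b₁, b₂⟩ => ⟨a₁.trans b₁, b₂.trans a₂⟩⟩

/-- Turing degrees. -/
def NatTuringDegree : Type := Quotient turingSetoid

/-- The Turing degree of a total function. -/
def NatTuringDegree.deg (f : ℕ → ℕ) : NatTuringDegree := Quotient.mk turingSetoid f

instance : LE NatTuringDegree :=
  ⟨fun d₁ d₂ =>
    Quotient.liftOn₂ d₁ d₂ NatTuringReducible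
      (fun _ _ _ _ h h' =>
        propext ⟨fun hr => (h.2.trans hr).trans h'.1, fun hr => (h.1.trans hr).trans h'.2⟩)⟩

instance : LT NatTuringDegree := ⟨fun d₁ d₂ => d₁ ≤ d₂ ∧ ¬d₂ ≤ d₁⟩

/-- The least Turing degree. -/
def NatTuringDegree.zero : NatTuringDegree := NatTuringDegree.deg fun _ => 0

/-- A partial function is computable in a Turing degree if it is recursive in some
(equivalently, any) representative of that degree. -/
def NatTuringDegree.ComputableIn (d : NatTuringDegree) (f : ℕ →. ℕ) : Prop :=
  Quotient.liftOn d (fun g => NatRecursiveIn g f)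
    (fun _ _ h => propext ⟨fun hr => hr.trans' h.1, fun hr => hr.trans' h.2⟩)

open Classical in
/-- The characteristic function of a set of naturals. -/
noncomputable def charFun (A : Set ℕ) : ℕ → ℕ := fun n => if n ∈ A then 1 else 0

/-- Turing reducibility between sets of naturals. -/
noncomputable def SetTuringReducible (A B : Set ℕ) : Prop :=
  NatTuringReducible (charFun A) (charFun B)

/-- The Turing degree of a set of naturals. -/
noncomputable def NatTuringDegree.degSet (A : Set ℕ) : NatTuringDegree :=
  NatTuringDegree.deg (charFun A)

/-- `R` is `d`-computably reducible to `S`. -/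
def ReducibleIn (d : NatTuringDegree) (R S : ℕ → ℕ → Prop) : Prop :=
  ∃ f : ℕ → ℕ, d.ComputableIn ↑f ∧ ∀ x y, R x y ↔ S (f x) (f y)

/-- The reducibility spectrum of the pair `(R, S)`. -/
def SpecRed (R S : ℕ → ℕ → Prop) : Set NatTuringDegree := {d | ReducibleIn d R S}

/-- The bi-reducibility spectrum of the pair `(R, S)`. -/
def SpecBired (R S : ℕ → ℕ → Prop) : Set NatTuringDegree :=
  {d | ReducibleIn d R S ∧ ReducibleIn d S R}

/-- The equivalence relation generated by a set `A`: two numbers are equivalent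
iff they are equal or both belong to `A`. -/
def genRel (A : Set ℕ) : ℕ → ℕ → Prop := fun x y => x = y ∨ (x ∈ A ∧ y ∈ A)

/-- A ceer: an equivalence relation whose set of pairs is computably enumerable. -/
def Ceer (R : ℕ → ℕ → Prop) : Prop :=
  Equivalence R ∧ REPred fun p : ℕ × ℕ => R p.1 p.2

/-- A computably enumerable set of naturals. -/
def CePred (A : Set ℕ) : Prop := REPred (· ∈ A)

/-- A partial transversal of `R`: a set any two distinct elements of which are
`R`-inequivalent. -/
def PartialTransversal (R : ℕ → ℕ → Prop) (A : Set ℕ) : Prop :=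
  ∀ x ∈ A, ∀ y ∈ A, x ≠ y → ¬R x y

/-- An introreducible set: an infinite set computable from each of its infinite subsets. -/
def Introreducible (B : Set ℕ) : Prop :=
  B.Infinite ∧ ∀ C : Set ℕ, C ⊆ B → C.Infinite → SetTuringReducible B C

/-!
An infinite set `Y` that is c.e. in `f` has an infinite subset computable in `f`: enumerate `Y`
relative to `f` and keep the numbers that appear as strict new maxima of the enumeration (its
records). A number `n` is a record iff the first stage enumerating something `≥ n` enumerates `n`
itself; since `Y` is infinite that stage exists, so `f` decides the records. Introreducibility
then gives `B ≤_T records ≤_T f`.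

The enumeration of `Y` relative to `f` rests on the use principle: an `f`-recursive function is
the limit of ordinary partial recursive functions run on the finite initial segments
`f 0, …, f (k - 1)`, and these can be evaluated in stages with `Nat.Partrec.Code.evaln`.
-/

open Filter

namespace PFun

-- These are, definitionally, the functions built by the clauses `pair`, `prec` and `rfind` of
-- `NatRecursiveIn`.

def natPair (f g : ℕ →. ℕ) : ℕ →. ℕ := fun n => Nat.pair <$> f n <*> g n

def natPrec (f g : ℕ →. ℕ) : ℕ →. ℕ :=
  Nat.unpaired fun a n =>
    n.rec (f a) fun y IH => do let i ← IH; g (Nat.pair a (Nat.pair y i))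

def natRfind (f : ℕ →. ℕ) : ℕ →. ℕ :=
  fun a => Nat.rfind fun n => (fun m => m = 0) <$> f (Nat.pair a n)

theorem mem_natPair {f g : ℕ →. ℕ} {n v : ℕ} :
    v ∈ natPair f g n ↔ ∃ a ∈ f n, ∃ b ∈ g n, Nat.pair a b = v := by
  simp [natPair, Seq.seq]

theorem natPrec_pair_zero (f g : ℕ →. ℕ) (a : ℕ) : natPrec f g (Nat.pair a 0) = f a := by
  simp [natPrec]

theorem natPrec_pair_succ (f g : ℕ →. ℕ) (a m : ℕ) :
    natPrec f g (Nat.pair a (m + 1)) =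
      (natPrec f g (Nat.pair a m)).bind fun i => g (Nat.pair a (Nat.pair m i)) := by
  simp [natPrec]

theorem mem_natRfind {f : ℕ →. ℕ} {a v : ℕ} :
    v ∈ natRfind f a ↔
      0 ∈ f (Nat.pair a v) ∧ ∀ j < v, ∃ w ∈ f (Nat.pair a j), w ≠ 0 := by
  refine Nat.mem_rfind.trans ?_
  simp [Part.mem_map_iff]

end PFun

structure ApproxFromBelow {ι : Type*} (l : Filter ι) (F : ι → ℕ →. ℕ) (f : ℕ →. ℕ) :
    Prop where
  le : ∀ i n, F i n ≤ f n
  eventually_mem : ∀ n v, v ∈ f n → ∀ᶠ i in l, v ∈ F i n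

namespace ApproxFromBelow

variable {ι : Type*} {l : Filter ι} {F G : ι → ℕ →. ℕ} {f g : ℕ →. ℕ}

theorem const (f : ℕ →. ℕ) : ApproxFromBelow l (fun _ => f) f :=
  ⟨fun _ _ => le_rfl, fun _ _ hv => Eventually.of_forall fun _ => hv⟩

theorem comp (hf : ApproxFromBelow l F f) (hg : ApproxFromBelow l G g) :
    ApproxFromBelow l (fun i => (F i).comp (G i)) (f.comp g) where
  le i n v hv := by
    obtain ⟨a, ha, hv⟩ := Part.mem_bind_iff.1 hv
    exact Part.mem_bind_iff.2 ⟨a, hg.le i n a ha, hf.le i a v hv⟩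
  eventually_mem n v hv := by
    obtain ⟨a, ha, hv⟩ := Part.mem_bind_iff.1 hv
    filter_upwards [hg.eventually_mem n a ha, hf.eventually_mem a v hv] with i hga hfv
    exact Part.mem_bind_iff.2 ⟨a, hga, hfv⟩

theorem natPair (hf : ApproxFromBelow l F f) (hg : ApproxFromBelow l G g) :
    ApproxFromBelow l (fun i => PFun.natPair (F i) (G i)) (PFun.natPair f g) where
  le i n v hv := by
    obtain ⟨a, ha, b, hb, rfl⟩ := PFun.mem_natPair.1 hv
    exact PFun.mem_natPair.2 ⟨a, hf.le i n a ha, b, hg.le i n b hb, rfl⟩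
  eventually_mem n v hv := by
    obtain ⟨a, ha, b, hb, rfl⟩ := PFun.mem_natPair.1 hv
    filter_upwards [hf.eventually_mem n a ha, hg.eventually_mem n b hb] with i hfa hgb
    exact PFun.mem_natPair.2 ⟨a, hfa, b, hgb, rfl⟩

theorem natPrec (hf : ApproxFromBelow l F f) (hg : ApproxFromBelow l G g) :
    ApproxFromBelow l (fun i => PFun.natPrec (F i) (G i)) (PFun.natPrec f g) := by
  suffices h : ∀ a m,
      (∀ i, PFun.natPrec (F i) (G i) (Nat.pair a m) ≤ PFun.natPrec f g (Nat.pair a m)) ∧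
      ∀ v ∈ PFun.natPrec f g (Nat.pair a m),
        ∀ᶠ i in l, v ∈ PFun.natPrec (F i) (G i) (Nat.pair a m) by
    refine ⟨fun i n => ?_, fun n => ?_⟩
    · simpa using (h n.unpair.1 n.unpair.2).1 i
    · simpa using (h n.unpair.1 n.unpair.2).2
  intro a m
  induction m with
  | zero =>
    simp only [PFun.natPrec_pair_zero]
    exact ⟨fun i => hf.le i a, hf.eventually_mem a⟩
  | succ m ih =>
    simp only [PFun.natPrec_pair_succ]
    refine ⟨fun i v hv => ?_, fun v hv => ?_⟩
    · obtain ⟨j, hj, hv⟩ := Part.mem_bind_iff.1 hv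
      exact Part.mem_bind_iff.2 ⟨j, ih.1 i j hj, hg.le i _ v hv⟩
    · obtain ⟨j, hj, hv⟩ := Part.mem_bind_iff.1 hv
      filter_upwards [ih.2 j hj, hg.eventually_mem _ v hv] with i hij hiv
      exact Part.mem_bind_iff.2 ⟨j, hij, hiv⟩

theorem natRfind (hf : ApproxFromBelow l F f) :
    ApproxFromBelow l (fun i => PFun.natRfind (F i)) (PFun.natRfind f) where
  le i n v hv := by
    obtain ⟨h0, hlt⟩ := PFun.mem_natRfind.1 hv
    refine PFun.mem_natRfind.2 ⟨hf.le i _ 0 h0, fun j hj => ?_⟩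
    obtain ⟨w, hw, hw0⟩ := hlt j hj
    exact ⟨w, hf.le i _ w hw, hw0⟩
  eventually_mem n v hv := by
    obtain ⟨h0, hlt⟩ := PFun.mem_natRfind.1 hv
    have hbelow : ∀ᶠ i in l, ∀ j : Fin v, ∃ w ∈ F i (Nat.pair n j), w ≠ 0 :=
      eventually_all.2 fun j => by
        obtain ⟨w, hw, hw0⟩ := hlt j j.2
        filter_upwards [hf.eventually_mem _ w hw] with i hi using ⟨w, hi, hw0⟩
    filter_upwards [hf.eventually_mem _ 0 h0, hbelow] with i hi0 hij
    exact PFun.mem_natRfind.2 ⟨hi0, fun j hj => hij ⟨j, hj⟩⟩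

end ApproxFromBelow

namespace Partrec₂

variable {α : Type*} [Primcodable α] {F G : α → ℕ →. ℕ}

theorem pfun_comp (hF : Partrec₂ F) (hG : Partrec₂ G) : Partrec₂ fun a => (F a).comp (G a) :=
  (hG.bind (hF.comp (Computable.fst.comp Computable.fst) Computable.snd).to₂).to₂

theorem natPair (hF : Partrec₂ F) (hG : Partrec₂ G) :
    Partrec₂ fun a => PFun.natPair (F a) (G a) := by
  have hpair : Computable₂ fun (x : (α × ℕ) × ℕ) (b : ℕ) => Nat.pair x.2 b :=
    Primrec₂.natPair.to_comp.comp (Computable.snd.comp Computable.fst) Computable.snd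
  have := hF.bind ((hG.comp (Computable.fst.comp Computable.fst)
    (Computable.snd.comp Computable.fst)).map hpair).to₂
  exact this.to₂.of_eq fun x => by simp [PFun.natPair, Seq.seq]

theorem natPrec (hF : Partrec₂ F) (hG : Partrec₂ G) :
    Partrec₂ fun a => PFun.natPrec (F a) (G a) := by
  have hleft : Computable fun x : α × ℕ => x.2.unpair.1 :=
    Computable.fst.comp (Computable.unpair.comp Computable.snd)
  have hstep : Computable fun x : (α × ℕ) × ℕ × ℕ =>
      Nat.pair x.1.2.unpair.1 (Nat.pair x.2.1 x.2.2) :=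
    Primrec₂.natPair.to_comp.comp (hleft.comp Computable.fst)
      (Primrec₂.natPair.to_comp.comp (Computable.fst.comp Computable.snd)
        (Computable.snd.comp Computable.snd))
  have := Partrec.nat_rec (Computable.snd.comp (Computable.unpair.comp Computable.snd))
    (hF.comp Computable.fst hleft) (hG.comp (Computable.fst.comp Computable.fst) hstep).to₂
  exact this.of_eq fun x => by simp [PFun.natPrec, Nat.unpaired]

theorem natRfind (hF : Partrec₂ F) : Partrec₂ fun a => PFun.natRfind (F a) := by
  have := Partrec.rfind ((hF.comp (Computable.fst.comp Computable.fst)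
    (Primrec₂.natPair.to_comp.comp (Computable.snd.comp Computable.fst) Computable.snd)).map
      (Primrec.eq.comp Primrec.snd (Primrec.const 0)).decide.to_comp.to₂).to₂
  exact this.of_eq fun x => by simp [PFun.natRfind]

end Partrec₂

def initSeg (O : ℕ → ℕ) (k : ℕ) : List ℕ := (List.range k).map O

theorem getElem?_initSeg (O : ℕ → ℕ) (k n : ℕ) :
    (initSeg O k)[n]? = if n < k then some (O n) else none := by
  split_ifs with h <;> simp [initSeg, h]

theorem approxFromBelow_initSeg (O : ℕ → ℕ) :
    ApproxFromBelow atTop (fun k n => ((initSeg O k)[n]? : Part ℕ)) O where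
  le k n v hv := by
    rw [getElem?_initSeg] at hv
    split_ifs at hv
    · simpa using hv
    · exact absurd hv (Part.notMem_none v)
  eventually_mem n v hv := by
    filter_upwards [eventually_gt_atTop n] with k hk
    simpa [getElem?_initSeg, hk] using hv

/-- The use principle: a halting computation from the oracle `O` reads only finitely many values
of `O`, so the same program run on a long enough initial segment of `O` gives the same result. -/
theorem NatRecursiveIn.exists_partrec_approx {O : ℕ → ℕ} {p : ℕ →. ℕ}
    (hp : NatRecursiveIn O p) :
    ∃ P : List ℕ → ℕ →. ℕ, Partrec₂ P ∧ ApproxFromBelow atTop (fun k => P (initSeg O k)) p := by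
  have of_partrec {q : ℕ →. ℕ} (hq : Nat.Partrec q) :
      ∃ P : List ℕ → ℕ →. ℕ, Partrec₂ P ∧ ApproxFromBelow atTop (fun k => P (initSeg O k)) q :=
    ⟨fun _ => q, (Partrec.nat_iff.2 hq).comp Computable.snd, .const q⟩
  induction hp with
  | zero => exact of_partrec .zero
  | succ => exact of_partrec .succ
  | left => exact of_partrec .left
  | right => exact of_partrec .right
  | oracle =>
    exact ⟨fun l n => l[n]?, Computable.list_getElem?.ofOption.to₂, approxFromBelow_initSeg O⟩
  | pair _ _ ihf ihg =>
    obtain ⟨F, hF, hFf⟩ := ihf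
    obtain ⟨G, hG, hGg⟩ := ihg
    exact ⟨_, hF.natPair hG, hFf.natPair hGg⟩
  | comp _ _ ihf ihg =>
    obtain ⟨F, hF, hFf⟩ := ihf
    obtain ⟨G, hG, hGg⟩ := ihg
    exact ⟨_, hF.pfun_comp hG, hFf.comp hGg⟩
  | prec _ _ ihf ihg =>
    obtain ⟨F, hF, hFf⟩ := ihf
    obtain ⟨G, hG, hGg⟩ := ihg
    exact ⟨_, hF.natPrec hG, hFf.natPrec hGg⟩
  | rfind _ ihf =>
    obtain ⟨F, hF, hFf⟩ := ihf
    exact ⟨_, hF.natRfind, hFf.natRfind⟩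

open Nat.Partrec (Code) in
theorem Partrec.exists_computable_stages {α : Type*} [Primcodable α] {P : α →. ℕ}
    (hP : Partrec P) :
    ∃ E : ℕ → α → Option ℕ, Computable₂ E ∧ ∀ a v, v ∈ P a ↔ ∃ s, v ∈ E s a := by
  obtain ⟨c, hc⟩ := Nat.Partrec.Code.exists_code.1 hP
  refine ⟨fun s a => Code.evaln s c (Encodable.encode a), ?_, fun a v => ?_⟩
  · exact (Nat.Partrec.Code.primrec_evaln.to_comp.comp ((Computable.fst.pair
      (Computable.const c)).pair (Computable.encode.comp Computable.snd))).to₂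
  · have : Code.eval c (Encodable.encode a) = P a := by simp [hc, Part.map_id']
    rw [← this, Nat.Partrec.Code.evaln_complete]

namespace NatRecursiveIn

variable {O : ℕ → ℕ}

theorem of_eq {p q : ℕ →. ℕ} (hp : NatRecursiveIn O p) (h : ∀ n, p n = q n) :
    NatRecursiveIn O q :=
  funext h ▸ hp

theorem of_partrec {p : ℕ →. ℕ} (hp : Nat.Partrec p) : NatRecursiveIn O p := by
  induction hp with
  | zero => exact .zero
  | succ => exact .succ
  | left => exact .left
  | right => exact .right
  | pair _ _ ihf ihg => exact .pair ihf ihg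
  | comp _ _ ihf ihg => exact .comp ihf ihg
  | prec _ _ ihf ihg => exact .prec ihf ihg
  | rfind _ ihf => exact .rfind ihf

theorem of_computable {g : ℕ → ℕ} (hg : Computable g) : NatRecursiveIn O g :=
  .of_partrec (Partrec.nat_iff.1 hg.partrec)

theorem comp_total {g h : ℕ → ℕ} (hg : NatRecursiveIn O g) (hh : NatRecursiveIn O h) :
    NatRecursiveIn O ↑(g ∘ h) :=
  (hg.comp hh).of_eq fun _ => Part.bind_some _ _

theorem pair_total {g h : ℕ → ℕ} (hg : NatRecursiveIn O g) (hh : NatRecursiveIn O h) :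
    NatRecursiveIn O ↑(fun n => Nat.pair (g n) (h n)) :=
  (hg.pair hh).of_eq fun n => by simp [PFun.coe_val, Seq.seq]

theorem nat_find {p : ℕ → ℕ → Bool}
    (hp : NatRecursiveIn O (PFun.lift fun x => bif p x.unpair.1 x.unpair.2 then 0 else 1))
    (h : ∀ n, ∃ u, p n u = true) : NatRecursiveIn O ↑(fun n => Nat.find (h n)) := by
  have hmem (n : ℕ) : Nat.find (h n) ∈
      PFun.natRfind (PFun.lift fun x => bif p x.unpair.1 x.unpair.2 then 0 else 1) n := by
    refine PFun.mem_natRfind.2 ⟨?_, fun j hj => ⟨1, ?_, one_ne_zero⟩⟩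
    · simp [Nat.find_spec (h n)]
    · simp [Nat.find_min (h n) hj]
  exact (NatRecursiveIn.rfind hp).of_eq fun n => Part.eq_some_iff.2 (hmem n)

theorem encode_initSeg (f : ℕ → ℕ) :
    NatRecursiveIn f ↑(fun k => Encodable.encode (initSeg f k)) := by
  have hleft : Computable fun x : ℕ => x.unpair.1 := Computable.fst.comp Computable.unpair
  have hright : Computable fun x : ℕ => x.unpair.2 := Computable.snd.comp Computable.unpair
  let step : ℕ → ℕ := fun x =>
    Encodable.encode (Denumerable.ofNat (List ℕ) x.unpair.2.unpair.2 ++ [f x.unpair.2.unpair.1])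
  have hstep : NatRecursiveIn f step := by
    have happend : Computable fun y : ℕ =>
        Encodable.encode (Denumerable.ofNat (List ℕ) y.unpair.1.unpair.2.unpair.2 ++
          [y.unpair.2]) :=
      Computable.encode.comp (Computable.list_concat.comp
        ((Computable.ofNat (List ℕ)).comp (hright.comp (hright.comp hleft))) hright)
    refine ((of_computable happend).comp_total ((of_computable Computable.id).pair_total
      (NatRecursiveIn.oracle.comp_total (of_computable (hleft.comp hright))))).of_eq fun x => ?_
    simp only [PFun.coe_val, Function.comp_apply, Nat.unpair_pair, id, step]
  have hval (k : ℕ) : PFun.natPrec (PFun.lift fun _ => 0) step (Nat.pair 0 k) =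
      Part.some (Encodable.encode (initSeg f k)) := by
    induction k with
    | zero => simp [PFun.natPrec_pair_zero, initSeg]
    | succ k ih =>
      rw [PFun.natPrec_pair_succ, ih, Part.bind_some]
      simp [step, initSeg, List.range_succ]
  have hprec : NatRecursiveIn f (PFun.natPrec (PFun.lift fun _ => 0) step) :=
    .prec (of_computable (Computable.const 0)) hstep
  exact (hprec.comp (of_computable (Primrec₂.natPair.comp (Primrec.const 0)
    Primrec.id).to_comp)).of_eq fun k => (Part.bind_some _ _).trans (hval k)

end NatRecursiveIn

def ComputableFromInitSeg {σ : Type*} [Primcodable σ] (f : ℕ → ℕ) (e : ℕ → σ) : Prop :=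
  ∃ E : ℕ → List ℕ → σ, ∃ len : ℕ → ℕ, Computable₂ E ∧ Computable len ∧
    ∀ u, e u = E u (initSeg f (len u))

namespace ComputableFromInitSeg

variable {σ τ : Type*} [Primcodable σ] [Primcodable τ] {f : ℕ → ℕ}

theorem comp {e : ℕ → σ} (he : ComputableFromInitSeg f e) {g : ℕ → ℕ} (hg : Computable g)
    {G : ℕ → σ → τ} (hG : Computable₂ G) :
    ComputableFromInitSeg f fun x => G x (e (g x)) := by
  obtain ⟨E, len, hE, hlen, he⟩ := he
  exact ⟨fun x L => G x (E (g x) L), len ∘ g,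
    hG.comp Computable.fst (hE.comp (hg.comp Computable.fst) Computable.snd),
    hlen.comp hg, fun x => by simp [he]⟩

theorem natRecursiveIn {e : ℕ → ℕ} (he : ComputableFromInitSeg f e) : NatRecursiveIn f e := by
  obtain ⟨E, len, hE, hlen, he⟩ := he
  have hdecode : Computable fun y : ℕ => E y.unpair.1 (Denumerable.ofNat (List ℕ) y.unpair.2) :=
    hE.comp (Computable.fst.comp Computable.unpair)
      ((Computable.ofNat (List ℕ)).comp (Computable.snd.comp Computable.unpair))
  refine ((NatRecursiveIn.of_computable hdecode).comp_total
    ((NatRecursiveIn.of_computable Computable.id).pair_total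
      ((NatRecursiveIn.encode_initSeg f).comp_total (.of_computable hlen)))).of_eq fun u => ?_
  simp [he]

end ComputableFromInitSeg

theorem NatRecursiveIn.exists_enumeration {f : ℕ → ℕ} {p : ℕ →. ℕ}
    (hp : NatRecursiveIn f p) :
    ∃ e : ℕ → Option ℕ, ComputableFromInitSeg f e ∧
      {n | ∃ u, e u = some n} = {n | (p n).Dom} := by
  obtain ⟨P, hP, happrox⟩ := hp.exists_partrec_approx
  obtain ⟨E, hE, hEP⟩ :=
    Partrec.exists_computable_stages (hP : Partrec fun x : List ℕ × ℕ => P x.1 x.2)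
  -- stage `⟪k, ⟪s, n⟫⟫` runs `s` steps on input `n`, reading the oracle values below `k`
  let stage (u : ℕ) (L : List ℕ) : Option ℕ :=
    (E u.unpair.2.unpair.1 (L, u.unpair.2.unpair.2)).map fun _ => u.unpair.2.unpair.2
  refine ⟨fun u => stage u (initSeg f u.unpair.1),
    ⟨stage, fun u => u.unpair.1, ?_, Computable.fst.comp Computable.unpair, fun _ => rfl⟩, ?_⟩
  · have hn : Computable fun x : ℕ × List ℕ => x.1.unpair.2.unpair.2 :=
      Computable.snd.comp (Computable.unpair.comp (Computable.snd.comp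
        (Computable.unpair.comp Computable.fst)))
    have hs : Computable fun x : ℕ × List ℕ => x.1.unpair.2.unpair.1 :=
      Computable.fst.comp (Computable.unpair.comp (Computable.snd.comp
        (Computable.unpair.comp Computable.fst)))
    exact Computable.option_map (hE.comp hs (Computable.snd.pair hn)) (hn.comp Computable.fst).to₂
  · ext n
    simp only [Set.mem_ofPred_eq, stage]
    constructor
    · rintro ⟨u, hu⟩
      obtain ⟨v, hv, rfl⟩ := Option.map_eq_some_iff.1 hu
      exact Part.dom_iff_mem.2 ⟨v, happrox.le _ _ _ ((hEP _ v).2 ⟨_, hv⟩)⟩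
    · intro hn
      obtain ⟨v, hv⟩ := Part.dom_iff_mem.1 hn
      obtain ⟨k, hk⟩ := (happrox.eventually_mem n v hv).exists
      obtain ⟨s, hs⟩ := (hEP (initSeg f k, n) v).1 hk
      exact ⟨Nat.pair k (Nat.pair s n), by simp [Option.mem_def.1 hs]⟩

def records (e : ℕ → Option ℕ) : Set ℕ :=
  {n | ∃ u, e u = some n ∧ ∀ u' < u, ∀ m, e u' = some m → m < n}

section records

variable {e : ℕ → Option ℕ}

theorem records_subset (e : ℕ → Option ℕ) : records e ⊆ {n | ∃ u, e u = some n} :=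
  fun _ ⟨u, hu, _⟩ => ⟨u, hu⟩

theorem records_infinite (h : {n | ∃ u, e u = some n}.Infinite) : (records e).Infinite := by
  classical
  refine Set.infinite_of_forall_exists_gt fun b => ?_
  have hex : ∃ u, ∃ m, e u = some m ∧ b < m := by
    obtain ⟨m, ⟨u, hu⟩, hbm⟩ := h.exists_gt b
    exact ⟨u, m, hu, hbm⟩
  obtain ⟨m, hm, hbm⟩ := Nat.find_spec hex
  refine ⟨m, ⟨Nat.find hex, hm, fun u' hu' m' hm' => ?_⟩, hbm⟩
  by_contra! hle
  exact Nat.find_min hex hu' ⟨m', hm', hbm.trans_le hle⟩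

theorem mem_records_iff {n u : ℕ} (hu : ∃ m, e u = some m ∧ n ≤ m)
    (hmin : ∀ u' < u, ∀ m, e u' = some m → m < n) : n ∈ records e ↔ e u = some n := by
  refine ⟨fun ⟨t, ht, hlt⟩ => ?_, fun h => ⟨u, h, hmin⟩⟩
  obtain ⟨m, hm, hnm⟩ := hu
  rcases lt_trichotomy u t with hut | rfl | htu
  · exact absurd (hlt u hut m hm) (not_lt.2 hnm)
  · exact ht
  · exact absurd (hmin t htu n ht) (lt_irrefl n)

theorem charFun_records_recursiveIn {f : ℕ → ℕ} (he : ComputableFromInitSeg f e)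
    (hinf : {n | ∃ u, e u = some n}.Infinite) : NatRecursiveIn f ↑(charFun (records e)) := by
  have hex (n : ℕ) : ∃ u, (e u).any (n ≤ ·) = true := by
    obtain ⟨m, ⟨u, hu⟩, hnm⟩ := hinf.exists_gt n
    exact ⟨u, by simp [hu, hnm.le]⟩
  have hright : Computable fun x : ℕ => x.unpair.2 := Computable.snd.comp Computable.unpair
  have hfirst : NatRecursiveIn f ↑(fun n => Nat.find (hex n)) := by
    refine NatRecursiveIn.nat_find (he.comp hright
      (G := fun x o => bif o.any (x.unpair.1 ≤ ·) then 0 else 1) ?_).natRecursiveIn hex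
    have hany : Primrec₂ fun (x : ℕ) (o : Option ℕ) => o.any (x.unpair.1 ≤ ·) :=
      (Primrec.option_casesOn Primrec.snd (Primrec.const false)
        (Primrec.nat_le.decide.comp ((Primrec.fst.comp Primrec.unpair).comp
          (Primrec.fst.comp Primrec.fst)) Primrec.snd).to₂).of_eq fun p => by cases p.2 <;> rfl
    exact (Primrec.cond hany (Primrec.const 0) (Primrec.const 1)).to_comp
  have hcheck :
      NatRecursiveIn f (PFun.lift fun x => if e x.unpair.2 = some x.unpair.1 then 1 else 0) := by
    refine (he.comp hright (G := fun x o => if o = some x.unpair.1 then 1 else 0) ?_).natRecursiveIn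
    exact (Primrec.ite (Primrec.eq.comp Primrec.snd
      (Primrec.option_some.comp (Primrec.fst.comp (Primrec.unpair.comp Primrec.fst))))
      (Primrec.const 1) (Primrec.const 0)).to_comp
  refine (hcheck.comp_total ((NatRecursiveIn.of_computable Computable.id).pair_total
    hfirst)).of_eq fun n => ?_
  have hu : ∃ m, e (Nat.find (hex n)) = some m ∧ n ≤ m := by
    simpa using (Option.any_eq_true _ _).1 (Nat.find_spec (hex n))
  have hmin : ∀ u < Nat.find (hex n), ∀ m, e u = some m → m < n := by
    intro u hu m hm
    simpa [hm] using Nat.find_min (hex n) hu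
  simp only [PFun.coe_val, Function.comp_apply, Nat.unpair_pair, id, charFun,
    mem_records_iff hu hmin]

end records

/-- If `B` is introreducible and some infinite `Y ⊆ B` is c.e.
relative to `f`, then `B` is Turing reducible to `f`. -/
theorem stmt_7 (B : Set ℕ) (hB : Introreducible B) (f : ℕ → ℕ)
    (Y : Set ℕ) (hYB : Y ⊆ B) (hYinf : Y.Infinite)
    (hYce : ∃ p : ℕ →. ℕ, NatRecursiveIn f p ∧ Y = {n | (p n).Dom}) :
    NatTuringReducible (charFun B) f := by
  obtain ⟨p, hp, rfl⟩ := hYce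
  obtain ⟨e, he, hrange⟩ := hp.exists_enumeration
  rw [← hrange] at hYB hYinf
  have hBC : SetTuringReducible B (records e) :=
    hB.2 _ ((records_subset e).trans hYB) (records_infinite hYinf)
  exact hBC.trans (charFun_records_recursiveIn he hYinf)
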